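/- arXiv:2303.00463 — 4 statements merged into one kernel-verified Lean document; each statement's English description precedes it below -/
import Mathlib

section
/- Let q ≥ 2 be a real number and τ > 0. For real numbers a, b, write a_τ = min{a, τ} and b_τ = min{b, τ}. Then (4(q−1)/q²) · ( a|a_τ|^{q/2−1} − b|b_τ|^{q/2−1} )² ≤ (a − b) · ( a|a_τ|^{q−2} − b|b_τ|^{q−2} ). -/
/-!
Put `r = q/2 - 1`, `c = (2r+1)/(r+1)² = 4(q-1)/q²`, `f t = t |t_τ|^r` and `g t = t |t_τ|^{2r}`.
Pointwise `c f'² ≤ g'`: with equality below `τ`, where `f' = (r+1)|t|^r` and `g' = (2r+1)|t|^{2r}`,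
and because `c ≤ 1` above `τ`, where `f' = |τ|^r` and `g' = |τ|^{2r}`. Hence for every `μ` the
function `c (μ² t - 2μ f t) + g t`, whose derivative is `c (μ - f')² + (g' - c f'²)`, is monotone.
Comparing its values at `a` and `b` gives a quadratic in `μ` that is everywhere nonnegative, and
the sign of its discriminant is the inequality: the Cauchy–Schwarz bound
`(∫ f')² ≤ (a - b) ∫ f'²`, without integrals.
-/

open Set

theorem mul_sq_sub_le_of_monotone {f g : ℝ → ℝ} {c : ℝ} (hc : 0 < c)
    (h : ∀ μ : ℝ, Monotone fun t => c * (μ ^ 2 * t - 2 * μ * f t) + g t) (a b : ℝ) :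
    c * (f a - f b) ^ 2 ≤ (a - b) * (g a - g b) := by
  wlog hba : b ≤ a generalizing a b
  · linarith [this b a (le_of_not_ge hba)]
  have hquad : ∀ μ : ℝ,
      0 ≤ c * (a - b) * (μ * μ) + -2 * c * (f a - f b) * μ + (g a - g b) := fun μ => by
    linarith [h μ hba]
  have hdiscrim := discrim_le_zero hquad
  rw [discrim] at hdiscrim
  nlinarith

theorem monotone_of_hasDerivAt_nonneg_of_ne {f f' : ℝ → ℝ} {a : ℝ} (hf : Continuous f)
    (hf' : ∀ x ≠ a, HasDerivAt f (f' x) x) (hf'₀ : ∀ x ≠ a, 0 ≤ f' x) : Monotone f := by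
  have hIic := monotoneOn_of_hasDerivWithinAt_nonneg (convex_Iic a) hf.continuousOn
    (fun x hx => (hf' x (interior_Iic.subset hx).ne).hasDerivWithinAt)
    (fun x hx => hf'₀ x (interior_Iic.subset hx).ne)
  have hIci := monotoneOn_of_hasDerivWithinAt_nonneg (convex_Ici a) hf.continuousOn
    (fun x hx => (hf' x (interior_Ici.subset hx).ne').hasDerivWithinAt)
    (fun x hx => hf'₀ x (interior_Ici.subset hx).ne')
  exact hIic.Iic_union_Ici hIci

theorem abs_rpow_two_mul (x r : ℝ) : |x| ^ (2 * r) = (|x| ^ r) ^ 2 := by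
  rw [mul_comm, Real.rpow_mul (abs_nonneg x), Real.rpow_two]

theorem continuous_mul_abs_rpow {r : ℝ} (hr : 0 ≤ r) : Continuous fun t : ℝ => t * |t| ^ r :=
  continuous_id.mul (continuous_abs.rpow_const fun _ => .inr hr)

theorem hasDerivAt_mul_abs_rpow {x : ℝ} (r : ℝ) (hx : x ≠ 0) :
    HasDerivAt (fun t => t * |t| ^ r) ((r + 1) * |x| ^ r) x := by
  have hx' : |x| ≠ 0 := abs_ne_zero.2 hx
  refine ((hasDerivAt_id' x).mul
    ((hasDerivAt_abs hx).rpow_const (p := r) (.inl hx'))).congr_deriv ?_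
  rw [Real.rpow_sub_one hx', ← mul_assoc, ← mul_assoc, self_mul_sign]
  field_simp
  ring

theorem monotone_mul_abs_rpow_combination {r : ℝ} (hr : 0 ≤ r) (μ : ℝ) :
    Monotone fun t : ℝ =>
      (2 * r + 1) / (r + 1) ^ 2 * (μ ^ 2 * t - 2 * μ * (t * |t| ^ r)) + t * |t| ^ (2 * r) := by
  set c := (2 * r + 1) / (r + 1) ^ 2
  refine monotone_of_hasDerivAt_nonneg_of_ne (a := 0)
    (f' := fun x => c * (μ ^ 2 * 1 - 2 * μ * ((r + 1) * |x| ^ r)) + (2 * r + 1) * |x| ^ (2 * r))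
    (by
      have := continuous_mul_abs_rpow hr
      have := continuous_mul_abs_rpow (by positivity : 0 ≤ 2 * r)
      fun_prop)
    (fun x hx => ((((hasDerivAt_id' x).const_mul (μ ^ 2)).sub
      ((hasDerivAt_mul_abs_rpow r hx).const_mul (2 * μ))).const_mul c).add
      (hasDerivAt_mul_abs_rpow (2 * r) hx)) (fun x _ => ?_)
  have hcr : c * (r + 1) ^ 2 = 2 * r + 1 := div_mul_cancel₀ _ (by positivity)
  have hsq : 0 ≤ c * (μ - (r + 1) * |x| ^ r) ^ 2 := by positivity
  rw [abs_rpow_two_mul]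
  linear_combination hsq + (|x| ^ r) ^ 2 * hcr

theorem monotone_mul_abs_min_rpow_combination {r : ℝ} (hr : 0 ≤ r) (τ μ : ℝ) :
    Monotone fun t : ℝ => (2 * r + 1) / (r + 1) ^ 2 * (μ ^ 2 * t - 2 * μ * (t * |min t τ| ^ r)) +
      t * |min t τ| ^ (2 * r) := by
  refine MonotoneOn.Iic_union_Ici (a := τ) ?_ ?_
  · refine ((monotone_mul_abs_rpow_combination hr μ).monotoneOn _).congr fun t ht => ?_
    simp only [min_eq_left (show t ≤ τ from ht)]
  · set c := (2 * r + 1) / (r + 1) ^ 2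
    have hc0 : 0 ≤ c := by positivity
    have hc1 : c ≤ 1 := (div_le_one (by positivity)).2 (by nlinarith)
    have hslope : 0 ≤ c * (μ ^ 2 - 2 * μ * |τ| ^ r) + |τ| ^ (2 * r) := by
      rw [abs_rpow_two_mul]
      nlinarith [mul_nonneg hc0 (sq_nonneg (μ - |τ| ^ r)),
        mul_nonneg (sub_nonneg.2 hc1) (sq_nonneg (|τ| ^ r))]
    refine ((monotone_id.const_mul hslope).monotoneOn _).congr fun t ht => ?_
    simp only [id, min_eq_right (show τ ≤ t from ht)]
    ring

theorem statement4_general (q τ a b : ℝ) (hq : 2 ≤ q) :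
    4 * (q - 1) / q ^ 2 *
        (a * |min a τ| ^ (q / 2 - 1) - b * |min b τ| ^ (q / 2 - 1)) ^ 2 ≤
      (a - b) * (a * |min a τ| ^ (q - 2) - b * |min b τ| ^ (q - 2)) := by
  have hr : 0 ≤ q / 2 - 1 := by linarith
  have hc : 4 * (q - 1) / q ^ 2 = (2 * (q / 2 - 1) + 1) / (q / 2 - 1 + 1) ^ 2 := by
    field_simp [(by linarith : 0 < q).ne']
    ring
  rw [show q - 2 = 2 * (q / 2 - 1) by ring, hc]
  exact mul_sq_sub_le_of_monotone (by positivity) (monotone_mul_abs_min_rpow_combination hr τ) a b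

/-- The elementary inequality behind Moser iteration with truncations. -/
theorem statement4 (q τ a b : ℝ) (hq : 2 ≤ q) (hτ : 0 < τ) :
    4 * (q - 1) / q ^ 2 *
        (a * |min a τ| ^ (q / 2 - 1) - b * |min b τ| ^ (q / 2 - 1)) ^ 2 ≤
      (a - b) * (a * |min a τ| ^ (q - 2) - b * |min b τ| ^ (q - 2)) :=
  statement4_general q τ a b hq
end

section
/- Let γ > 0 and c > 0. Define f : (−c, ∞) → ℝ by f(t) = c^{−γ} − (t + c)^{−γ}, and F : (−c, ∞) → ℝ by F(t) = ∫_0^t f(r) dr. Then for every real s ≥ 1 and every t ≥ 0, F(s·t) ≤ s² F(t). -/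
/-!
The integrand `f(r) = c^{-γ} - (r + c)^{-γ}` is concave on `[0, ∞)` and vanishes at `0`, so
`f(s u) ≤ s f(u)` for `s ≥ 1`. Substituting `r = s u` gives
`F(s t) = s ∫₀ᵗ f(s u) du ≤ s² ∫₀ᵗ f(u) du = s² F(t)`.
-/

open Set Real intervalIntegral

theorem convexOn_rpow_of_nonpos {p : ℝ} (hp : p ≤ 0) :
    ConvexOn ℝ (Ioi 0) fun x : ℝ ↦ x ^ p := by
  refine MonotoneOn.convexOn_of_deriv (convex_Ioi 0) ?_ ?_ ?_
  · exact fun x hx ↦ (continuousAt_rpow_const x p (Or.inl hx.ne')).continuousWithinAt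
  · rw [interior_Ioi]
    exact fun x hx ↦ (hasDerivAt_rpow_const (Or.inl hx.ne')).differentiableAt.differentiableWithinAt
  · rw [interior_Ioi, deriv_rpow_const']
    exact fun x hx y _ hxy ↦
      mul_le_mul_of_nonpos_left (rpow_le_rpow_of_nonpos hx hxy (by linarith)) hp

theorem ConcaveOn.map_mul_le_mul_of_map_zero {h : ℝ → ℝ} (hh : ConcaveOn ℝ (Ici 0) h)
    (h0 : h 0 = 0) {s u : ℝ} (hs : 1 ≤ s) (hu : 0 ≤ u) : h (s * u) ≤ s * h u := by
  have hs0 : 0 < s := by linarith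
  -- `u` is the convex combination `s⁻¹ • (s * u) + (1 - s⁻¹) • 0`
  have hcomb := hh.2 (mem_Ici.2 (mul_nonneg hs0.le hu)) self_mem_Ici (inv_nonneg.2 hs0.le)
    (sub_nonneg.2 (inv_le_one_of_one_le₀ hs)) (add_sub_cancel s⁻¹ 1)
  simp only [smul_eq_mul, mul_zero, add_zero, inv_mul_cancel_left₀ hs0.ne', h0] at hcomb
  rwa [inv_mul_le_iff₀ hs0] at hcomb

theorem ConcaveOn.integral_mul_le_sq_mul_integral {h : ℝ → ℝ} (hcont : ContinuousOn h (Ici 0))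
    (hh : ConcaveOn ℝ (Ici 0) h) (h0 : h 0 = 0) {s t : ℝ} (hs : 1 ≤ s) (ht : 0 ≤ t) :
    ∫ r in (0 : ℝ)..s * t, h r ≤ s ^ 2 * ∫ r in (0 : ℝ)..t, h r := by
  have hs0 : 0 < s := by linarith
  have hcont_mul : ContinuousOn (fun u ↦ h (s * u)) (Icc 0 t) :=
    hcont.comp (continuousOn_const.mul continuousOn_id)
      fun u hu ↦ mem_Ici.2 (mul_nonneg hs0.le hu.1)
  have hcont_Icc : ContinuousOn h (Icc 0 t) := hcont.mono Icc_subset_Ici_self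
  calc ∫ r in (0 : ℝ)..s * t, h r = s * ∫ u in (0 : ℝ)..t, h (s * u) := by
        rw [mul_integral_comp_mul_left, mul_zero]
    _ ≤ s * ∫ u in (0 : ℝ)..t, s * h u := by
        gcongr
        exact integral_mono_on ht (hcont_mul.intervalIntegrable_of_Icc ht)
          ((continuousOn_const.mul hcont_Icc).intervalIntegrable_of_Icc ht)
          fun u hu ↦ hh.map_mul_le_mul_of_map_zero h0 hs hu.1
    _ = s ^ 2 * ∫ r in (0 : ℝ)..t, h r := by
        rw [integral_const_mul]
        ring

/-- `F(x, s t) ≤ s² F(x, t)` for the primitive of the translated singular nonlinearity. -/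
theorem statement6 (γ c : ℝ) (hγ : 0 < γ) (hc : 0 < c) :
    ∀ s t : ℝ, 1 ≤ s → 0 ≤ t →
      (∫ r in (0 : ℝ)..(s * t), (c ^ (-γ) - (r + c) ^ (-γ))) ≤
        s ^ 2 * ∫ r in (0 : ℝ)..t, (c ^ (-γ) - (r + c) ^ (-γ)) := by
  intro s t hs ht
  have hpos : ∀ r ∈ Ici (0 : ℝ), 0 < r + c := fun r hr ↦ by linarith [mem_Ici.1 hr]
  have hshift : Ici (0 : ℝ) ⊆ (fun z ↦ c + z) ⁻¹' Ioi 0 := fun r hr ↦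
    show 0 < c + r by linarith [hpos r hr]
  have hconvex : ConvexOn ℝ (Ici 0) fun r : ℝ ↦ (r + c) ^ (-γ) :=
    ((convexOn_rpow_of_nonpos (neg_nonpos.2 hγ.le)).translate_left c).subset hshift
      (convex_Ici 0)
  have hconcave : ConcaveOn ℝ (Ici 0) fun r : ℝ ↦ c ^ (-γ) - (r + c) ^ (-γ) :=
    (concaveOn_const (c ^ (-γ)) (convex_Ici 0)).sub hconvex
  have hcont : ContinuousOn (fun r : ℝ ↦ c ^ (-γ) - (r + c) ^ (-γ)) (Ici 0) :=
    continuousOn_const.sub <| (continuousOn_id.add continuousOn_const).rpow_const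
      fun r hr ↦ Or.inl (hpos r hr).ne'
  exact hconcave.integral_mul_le_sq_mul_integral hcont (by simp) hs ht
end

section
/- Let n ≥ 3, 0 < μ < min{4, n}, and set 2_μ^* = (2n−μ)/(n−2). Let δ > 0 and let ψ : ℝⁿ → ℝ be a smooth function with 0 ≤ ψ ≤ 1 on ℝⁿ, ψ ≡ 1 on the closed ball of radius δ centered at 0, and ψ ≡ 0 outside the open ball of radius 2δ centered at 0. For ε ∈ (0,1) define U_ε : ℝⁿ → ℝ by U_ε(x) = ( ε / (ε² + ‖x‖²) )^{(n−2)/2} and set u_ε = ψ·U_ε. Let m > 0 and let v : ℝⁿ → ℝ be a measurable function with v ≥ 0 almost everywhere on ℝⁿ and v ≥ m almost everywhere on the ball of radius δ centered at 0. Then there exists T₀ > 0 such that for every ε ∈ (0,1), ∫_{ℝⁿ}∫_{ℝⁿ} u_ε(x)^{2_μ^*} u_ε(y)^{2_μ^*−1} v(y) / ‖x−y‖^μ dx dy ≥ T₀ ε^{(n−2)/2}. -/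
open MeasureTheory ENNReal Metric

set_option maxHeartbeats 1000000

lemma statement17_arith (n : ℕ) (hn : 3 ≤ n) (μ s p ε c B m : ℝ)
    (hs : s = ((n:ℝ)-2)/2) (hp : p = (2*(n:ℝ)-μ)/((n:ℝ)-2)) (hε : 0 < ε) :
    (2:ℝ) ^ (-(s*p) + -(s*(p-1))) * m * (c^n * B)^2 * ε ^ s
      = (((2*ε)⁻¹ ^ s) ^ p * ((2*ε)⁻¹ ^ s) ^ (p-1) * m / ε ^ μ)
        * ((c*ε)^n * B) * ((c*ε)^n * B) := by
  have hn2 : ((n:ℝ) - 2) ≠ 0 := by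
    have : (3:ℝ) ≤ (n:ℝ) := by exact_mod_cast hn
    linarith
  have h2ε : (0:ℝ) < 2*ε := by linarith
  have e1 : (2*ε)⁻¹ ^ s = (2*ε) ^ (-s) := by
    rw [Real.rpow_neg h2ε.le, ← Real.inv_rpow h2ε.le]
  have e2 : ((2*ε) ^ (-s)) ^ p = (2*ε) ^ (-(s*p)) := by
    rw [← Real.rpow_mul h2ε.le, neg_mul]
  have e3 : ((2*ε) ^ (-s)) ^ (p-1) = (2*ε) ^ (-(s*(p-1))) := by
    rw [← Real.rpow_mul h2ε.le, neg_mul]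
  have e4 : (2*ε) ^ (-(s*p)) * (2*ε) ^ (-(s*(p-1)))
      = 2 ^ (-(s*p) + -(s*(p-1))) * ε ^ (-(s*p) + -(s*(p-1))) := by
    rw [← Real.rpow_add h2ε, Real.mul_rpow (by norm_num) hε.le]
  have e5 : (c*ε)^n = c^n * ε ^ ((n:ℕ):ℝ) := by
    rw [mul_pow, Real.rpow_natCast]
  rw [e1, e2, e3, div_eq_mul_inv, e4, e5]
  rw [show -(s*p) + -(s*(p-1)) = s - 2*(n:ℝ) + μ by
    subst hs hp; field_simp; ring]
  rw [show (ε:ℝ) ^ (s - 2*(n:ℝ) + μ) = ε ^ s * (ε ^ ((n:ℕ):ℝ))⁻¹ * (ε ^ ((n:ℕ):ℝ))⁻¹ * ε ^ μ by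
    rw [← Real.rpow_neg hε.le, ← Real.rpow_add hε, ← Real.rpow_add hε, ← Real.rpow_add hε]
    ring_nf]
  have hεn : (ε:ℝ) ^ ((n:ℕ):ℝ) ≠ 0 := by positivity
  have hεμ : (ε:ℝ) ^ μ ≠ 0 := by positivity
  field_simp

/-- Lower bound on the cross Choquard term between the truncated bubble and a
function bounded below near the concentration point. -/
theorem statement17 (n : ℕ) (hn : 3 ≤ n) (μ : ℝ) (hμ0 : 0 < μ) (hμ4 : μ < 4) (hμn : μ < n)
    (δ : ℝ) (hδ : 0 < δ)
    (ψ : EuclideanSpace ℝ (Fin n) → ℝ) (hψ : ContDiff ℝ (⊤ : ℕ∞) ψ)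
    (hψ0 : ∀ x, 0 ≤ ψ x) (hψ1 : ∀ x, ψ x ≤ 1)
    (hψin : ∀ x : EuclideanSpace ℝ (Fin n), ‖x‖ ≤ δ → ψ x = 1)
    (hψout : ∀ x : EuclideanSpace ℝ (Fin n), 2 * δ ≤ ‖x‖ → ψ x = 0)
    (m : ℝ) (hm : 0 < m) (v : EuclideanSpace ℝ (Fin n) → ℝ) (hv : Measurable v)
    (hv0 : ∀ᵐ x, 0 ≤ v x)
    (hvm : ∀ᵐ x, x ∈ Metric.ball (0 : EuclideanSpace ℝ (Fin n)) δ → m ≤ v x) :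
    ∃ T₀ : ℝ, 0 < T₀ ∧ ∀ ε : ℝ, 0 < ε → ε < 1 →
      ENNReal.ofReal (T₀ * ε ^ (((n : ℝ) - 2) / 2)) ≤
        ∫⁻ x, ∫⁻ y, ENNReal.ofReal
          ((ψ x * (ε / (ε ^ 2 + ‖x‖ ^ 2)) ^ (((n : ℝ) - 2) / 2)) ^
              ((2 * (n : ℝ) - μ) / ((n : ℝ) - 2)) *
            (ψ y * (ε / (ε ^ 2 + ‖y‖ ^ 2)) ^ (((n : ℝ) - 2) / 2)) ^
              ((2 * (n : ℝ) - μ) / ((n : ℝ) - 2) - 1) * v y / ‖x - y‖ ^ μ) := by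
  haveI : Nontrivial (EuclideanSpace ℝ (Fin n)) :=
    Module.nontrivial_of_finrank_pos (R := ℝ) (by rw [finrank_euclideanSpace_fin]; omega)
  have hn2 : (0:ℝ) < (n:ℝ) - 2 := by
    have : (3:ℝ) ≤ (n:ℝ) := by exact_mod_cast hn
    linarith
  set s : ℝ := ((n:ℝ)-2)/2 with hsdef
  set p : ℝ := (2*(n:ℝ)-μ)/((n:ℝ)-2) with hpdef
  have hs0 : 0 < s := by rw [hsdef]; positivity
  have hp1 : 1 ≤ p := by
    rw [hpdef, le_div_iff₀ hn2]
    linarith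
  set c : ℝ := min 1 δ / 2 with hcdef
  have hc0 : 0 < c := by
    rw [hcdef]
    have := lt_min one_pos hδ
    positivity
  have hc1 : 2 * c ≤ 1 := by
    have := min_le_left 1 δ
    rw [hcdef]; linarith
  have hcδ : 2 * c ≤ δ := by
    have := min_le_right 1 δ
    rw [hcdef]; linarith
  set B : ℝ := (volume (ball (0:EuclideanSpace ℝ (Fin n)) 1)).toReal with hBdef
  have hB0 : 0 < B :=
    ENNReal.toReal_pos (measure_ball_pos _ _ one_pos).ne' measure_ball_lt_top.ne
  have hBvol : volume (ball (0:EuclideanSpace ℝ (Fin n)) 1) = ENNReal.ofReal B :=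
    (ENNReal.ofReal_toReal measure_ball_lt_top.ne).symm
  refine ⟨2 ^ (-(s*p) + -(s*(p-1))) * m * (c^n * B)^2, by positivity, ?_⟩
  intro ε hε hε1
  set r : ℝ := c * ε with hrdef
  have hr0 : 0 < r := by rw [hrdef]; positivity
  have hrδ : r < δ := by
    rw [hrdef]
    nlinarith
  have hrε2 : 2 * r ≤ ε := by
    rw [hrdef]
    nlinarith
  set K : ℝ := ((2*ε)⁻¹ ^ s) ^ p * ((2*ε)⁻¹ ^ s) ^ (p-1) * m / ε ^ μ with hKdef
  have hK0 : 0 ≤ K := by rw [hKdef]; positivity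
  -- pointwise bound
  have key : ∀ x ∈ ball (0:EuclideanSpace ℝ (Fin n)) r,
      ∀ y ∈ ball (0:EuclideanSpace ℝ (Fin n)) r, y ≠ x → m ≤ v y →
      K ≤ (ψ x * (ε/(ε^2+‖x‖^2)) ^ s) ^ p * (ψ y * (ε/(ε^2+‖y‖^2)) ^ s) ^ (p-1)
            * v y / ‖x-y‖ ^ μ := by
    intro x hx y hy hxy hvy
    rw [mem_ball_zero_iff] at hx hy
    rw [hψin x (by linarith), hψin y (by linarith), one_mul, one_mul]
    have hbound : ∀ z : EuclideanSpace ℝ (Fin n), ‖z‖ < r →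
        (2*ε)⁻¹ ≤ ε/(ε^2+‖z‖^2) := by
      intro z hz
      have hz' : ‖z‖ ≤ ε := by nlinarith [norm_nonneg z]
      rw [inv_eq_one_div, div_le_div_iff₀ (by positivity) (by positivity)]
      nlinarith [norm_nonneg z]
    have hxyε : ‖x - y‖ ≤ ε := by
      have := norm_sub_le x y
      linarith
    have hxyr : ‖x - y‖ ^ μ ≤ ε ^ μ :=
      Real.rpow_le_rpow (norm_nonneg _) hxyε hμ0.le
    have hxypos : (0:ℝ) < ‖x - y‖ ^ μ :=
      Real.rpow_pos_of_pos (by rw [norm_sub_pos_iff]; exact hxy.symm) μ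
    rw [hKdef]
    have hvy0 : 0 ≤ v y := le_trans hm.le hvy
    gcongr <;>
      first
        | positivity
        | exact hbound x hx
        | exact hbound y hy
        | exact hvy
        | exact hxyr
        | exact hxypos
        | linarith
        | exact mul_nonneg (by positivity) hvy0
  -- a.e. nonequality
  have hne : ∀ x : EuclideanSpace ℝ (Fin n), ∀ᵐ (y : EuclideanSpace ℝ (Fin n)), y ≠ x := by
    intro x
    rw [ae_iff]
    simp only [ne_eq, not_not, Set.setOf_eq_eq_singleton]
    exact measure_singleton x
  -- inner integral bound
  have inner : ∀ x ∈ ball (0:EuclideanSpace ℝ (Fin n)) r,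
      ENNReal.ofReal K * volume (ball (0:EuclideanSpace ℝ (Fin n)) r) ≤
      ∫⁻ y, ENNReal.ofReal
          ((ψ x * (ε/(ε^2+‖x‖^2)) ^ s) ^ p * (ψ y * (ε/(ε^2+‖y‖^2)) ^ s) ^ (p-1)
            * v y / ‖x-y‖ ^ μ) := by
    intro x hx
    calc ENNReal.ofReal K * volume (ball (0:EuclideanSpace ℝ (Fin n)) r)
        = ∫⁻ _ in ball (0:EuclideanSpace ℝ (Fin n)) r, ENNReal.ofReal K :=
          (setLIntegral_const _ _).symm
      _ ≤ ∫⁻ y in ball (0:EuclideanSpace ℝ (Fin n)) r, ENNReal.ofReal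
          ((ψ x * (ε/(ε^2+‖x‖^2)) ^ s) ^ p * (ψ y * (ε/(ε^2+‖y‖^2)) ^ s) ^ (p-1)
            * v y / ‖x-y‖ ^ μ) := by
          apply lintegral_mono_ae
          rw [ae_restrict_iff' measurableSet_ball]
          filter_upwards [hvm, hne x] with y hy1 hy2 hy3
          have hyδ : y ∈ ball (0:EuclideanSpace ℝ (Fin n)) δ := by
            rw [mem_ball_zero_iff] at hy3 ⊢
            linarith
          exact ENNReal.ofReal_le_ofReal (key x hx y hy3 hy2 (hy1 hyδ))
      _ ≤ _ := setLIntegral_le_lintegral _ _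
  -- main chain
  have hvolr : volume (ball (0:EuclideanSpace ℝ (Fin n)) r)
      = ENNReal.ofReal ((c*ε)^n) * ENNReal.ofReal B := by
    rw [Measure.addHaar_ball volume (0:EuclideanSpace ℝ (Fin n)) hr0.le,
      finrank_euclideanSpace_fin, hBvol, hrdef]
  calc ENNReal.ofReal (2 ^ (-(s*p) + -(s*(p-1))) * m * (c^n * B)^2 * ε ^ s)
      = ENNReal.ofReal (K * ((c*ε)^n * B) * ((c*ε)^n * B)) := by
        rw [hKdef, statement17_arith n hn μ s p ε c B m hsdef hpdef hε]
    _ = ENNReal.ofReal K * volume (ball (0:EuclideanSpace ℝ (Fin n)) r)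
          * volume (ball (0:EuclideanSpace ℝ (Fin n)) r) := by
        rw [hvolr, ENNReal.ofReal_mul (by positivity), ENNReal.ofReal_mul hK0,
          ENNReal.ofReal_mul (by positivity)]
    _ = ∫⁻ _ in ball (0:EuclideanSpace ℝ (Fin n)) r,
          (ENNReal.ofReal K * volume (ball (0:EuclideanSpace ℝ (Fin n)) r)) := by
        rw [setLIntegral_const]
    _ ≤ ∫⁻ x in ball (0:EuclideanSpace ℝ (Fin n)) r, ∫⁻ y, ENNReal.ofReal
          ((ψ x * (ε/(ε^2+‖x‖^2)) ^ s) ^ p * (ψ y * (ε/(ε^2+‖y‖^2)) ^ s) ^ (p-1)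
            * v y / ‖x-y‖ ^ μ) := by
        apply lintegral_mono_ae
        rw [ae_restrict_iff' measurableSet_ball]
        exact Filter.Eventually.of_forall inner
    _ ≤ _ := setLIntegral_le_lintegral _ _
end

section
/- Let n ≥ 3 and δ > 0. Let ψ : ℝⁿ → ℝ be a smooth function with 0 ≤ ψ ≤ 1 on ℝⁿ, ψ ≡ 1 on the closed ball of radius δ centered at 0, and ψ ≡ 0 outside the open ball of radius 2δ centered at 0. For ε ∈ (0,1) define U_ε : ℝⁿ → ℝ by U_ε(x) = ( ε / (ε² + ‖x‖²) )^{(n−2)/2} and set u_ε = ψ·U_ε. Let ρ > 1 be a real number with ρ(n−2) < n. Then there exists T₁ > 0 such that for every ε ∈ (0,1), ∫_{ℝⁿ} u_ε(x)^ρ dx ≤ T₁ ε^{(n−2)ρ/2}. -/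
open MeasureTheory ENNReal

open Set Metric in
private lemma aux_ball_rpow (n : ℕ) (hn : 3 ≤ n) {s R : ℝ} (hs : s < n) (hR : 0 < R) :
    ∫⁻ x : EuclideanSpace ℝ (Fin n),
      (Metric.ball (0 : EuclideanSpace ℝ (Fin n)) R).indicator
        (fun x => ENNReal.ofReal (‖x‖ ^ (-s))) x < ⊤ := by
  haveI : NeZero n := ⟨by omega⟩
  set E := EuclideanSpace ℝ (Fin n) with hE
  have hdim : Module.finrank ℝ E = n := finrank_euclideanSpace_fin
  haveI : Nontrivial E := Module.nontrivial_of_finrank_pos (R := ℝ) (by omega : 0 < Module.finrank ℝ E)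
  set g : ℝ → ℝ≥0∞ := fun r => if r < R then ENNReal.ofReal (r ^ (-s)) else 0 with hgdef
  have hgm : Measurable g := by
    apply Measurable.ite measurableSet_Iio
    · fun_prop
    · exact measurable_const
  have heq : ∀ x : E, (Metric.ball (0 : E) R).indicator
      (fun x => ENNReal.ofReal (‖x‖ ^ (-s))) x = g ‖x‖ := by
    intro x
    by_cases hx : x ∈ Metric.ball (0 : E) R
    · rw [Set.indicator_of_mem hx, hgdef]
      simp [mem_ball_zero_iff.mp hx]
    · rw [Set.indicator_of_notMem hx, hgdef]
      simp [mem_ball_zero_iff] at hx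
      simp [not_lt.mpr hx]
  have hmp := Measure.measurePreserving_homeomorphUnitSphereProd (volume : Measure E)
  have hcomp := hmp.lintegral_comp
    (f := fun p : sphere (0:E) 1 × Ioi (0:ℝ) => g p.2.1) (by fun_prop)
  calc ∫⁻ x : E, (Metric.ball (0 : E) R).indicator
        (fun x => ENNReal.ofReal (‖x‖ ^ (-s))) x
      = ∫⁻ x : E, g ‖x‖ := lintegral_congr heq
    _ = ∫⁻ x in ({0}ᶜ : Set E), g ‖x‖ := by
        rw [setLIntegral_congr (s := ({0}ᶜ : Set E)) (t := (Set.univ : Set E))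
          (by rw [ae_eq_univ]; simpa using measure_singleton (0 : E)),
          Measure.restrict_univ]
    _ = ∫⁻ y : ({0}ᶜ : Set E), g ‖(y : E)‖ ∂((volume : Measure E).comap Subtype.val) := by
        rw [lintegral_subtype_comap (measurableSet_singleton (0:E)).compl (fun x => g ‖x‖)]
    _ = ∫⁻ p : sphere (0:E) 1 × Ioi (0:ℝ), g p.2.1
          ∂((volume : Measure E).toSphere.prod (Measure.volumeIoiPow (Module.finrank ℝ E - 1))) := by
        rw [← hcomp]
        exact lintegral_congr fun y => by simp
    _ = (∫⁻ _ : sphere (0:E) 1, (1:ℝ≥0∞) ∂(volume : Measure E).toSphere) *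
          ∫⁻ y : Ioi (0:ℝ), g y.1 ∂(Measure.volumeIoiPow (Module.finrank ℝ E - 1)) := by
        have hprod := lintegral_prod_mul (μ := (volume : Measure E).toSphere)
          (ν := Measure.volumeIoiPow (Module.finrank ℝ E - 1))
          (f := fun _ : sphere (0:E) 1 => (1:ℝ≥0∞))
          (g := fun y : Ioi (0:ℝ) => g y.1) aemeasurable_const (by fun_prop)
        rw [← hprod]
        exact lintegral_congr fun p => (one_mul _).symm
    _ < ⊤ := by
        apply ENNReal.mul_lt_top
        · simpa using (measure_lt_top (volume : Measure E).toSphere Set.univ)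
        · rw [Measure.volumeIoiPow, lintegral_withDensity_eq_lintegral_mul _
            (f := fun r : Ioi (0:ℝ) => ENNReal.ofReal (r.1 ^ (Module.finrank ℝ E - 1)))
            (by fun_prop) (g := fun y : Ioi (0:ℝ) => g y.1) (by fun_prop)]
          have h1 : ∫⁻ y : Ioi (0:ℝ), ((fun r : Ioi (0:ℝ) =>
                ENNReal.ofReal (r.1 ^ (Module.finrank ℝ E - 1))) * fun y : Ioi (0:ℝ) => g y.1) y
                ∂(Measure.comap Subtype.val volume)
              = ∫⁻ y : Ioi (0:ℝ),
                  (fun r : ℝ => ENNReal.ofReal (r ^ (Module.finrank ℝ E - 1)) * g r) y.1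
                ∂(Measure.comap Subtype.val volume) := lintegral_congr fun y => rfl
          rw [h1, lintegral_subtype_comap measurableSet_Ioi
            (fun r : ℝ => ENNReal.ofReal (r ^ (Module.finrank ℝ E - 1)) * g r)]
          -- bound by integrable rpow on Ioo 0 R
          have hpow : -1 < (n : ℝ) - 1 - s := by
            have : (3:ℝ) ≤ n := by exact_mod_cast hn
            linarith
          have hInt : IntegrableOn (fun r : ℝ => r ^ ((n:ℝ) - 1 - s)) (Ioo 0 R) := by
            have := (intervalIntegral.intervalIntegrable_rpow' (a := 0) (b := R) hpow).1
            exact this.mono_set Ioo_subset_Ioc_self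
          have hbound : ∀ r ∈ Ioi (0:ℝ),
              ENNReal.ofReal (r ^ (Module.finrank ℝ E - 1)) * g r ≤
                (Ioo (0:ℝ) R).indicator (fun r => ENNReal.ofReal (r ^ ((n:ℝ) - 1 - s))) r := by
            intro r hr
            have hr0 : (0:ℝ) < r := hr
            by_cases hrR : r < R
            · rw [Set.indicator_of_mem (Set.mem_Ioo.mpr ⟨hr0, hrR⟩), hgdef]
              simp only [if_pos hrR]
              rw [← ENNReal.ofReal_mul (by positivity)]
              apply ENNReal.ofReal_le_ofReal
              rw [hdim]
              rw [← Real.rpow_natCast r (n-1), ← Real.rpow_add hr0]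
              apply le_of_eq
              congr 1
              have : ((n - 1 : ℕ) : ℝ) = (n:ℝ) - 1 := by
                have : (1:ℕ) ≤ n := by omega
                push_cast [Nat.cast_sub this]
                ring
              rw [this]; ring
            · rw [hgdef]; simp only [if_neg hrR, mul_zero]
              exact zero_le
          calc ∫⁻ r in Ioi (0:ℝ),
                  ENNReal.ofReal (r ^ (Module.finrank ℝ E - 1)) * g r
              ≤ ∫⁻ r in Ioi (0:ℝ),
                  (Ioo (0:ℝ) R).indicator (fun r => ENNReal.ofReal (r ^ ((n:ℝ) - 1 - s))) r := by
                apply setLIntegral_mono_ae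
                  (((by fun_prop : Measurable (fun r : ℝ => ENNReal.ofReal (r ^ ((n:ℝ) - 1 - s)))).indicator
                    measurableSet_Ioo).aemeasurable)
                · filter_upwards with r
                  exact fun hr => hbound r hr
            _ = ∫⁻ r in Ioo (0:ℝ) R, ENNReal.ofReal (r ^ ((n:ℝ) - 1 - s)) := by
                rw [lintegral_indicator measurableSet_Ioo, Measure.restrict_restrict
                  measurableSet_Ioo, Set.inter_eq_left.mpr (fun r hr => hr.1)]
            _ < ⊤ := hInt.lintegral_lt_top

open Set Metric in
/-- `L^ρ` smallness of the truncated bubble for subcritical exponents `ρ`. -/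
theorem statement18 (n : ℕ) (hn : 3 ≤ n) (δ : ℝ) (hδ : 0 < δ)
    (ψ : EuclideanSpace ℝ (Fin n) → ℝ) (hψ : ContDiff ℝ (⊤ : ℕ∞) ψ)
    (hψ0 : ∀ x, 0 ≤ ψ x) (hψ1 : ∀ x, ψ x ≤ 1)
    (hψin : ∀ x : EuclideanSpace ℝ (Fin n), ‖x‖ ≤ δ → ψ x = 1)
    (hψout : ∀ x : EuclideanSpace ℝ (Fin n), 2 * δ ≤ ‖x‖ → ψ x = 0)
    (ρ : ℝ) (hρ1 : 1 < ρ) (hρn : ρ * ((n : ℝ) - 2) < n) :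
    ∃ T₁ : ℝ, 0 < T₁ ∧ ∀ ε : ℝ, 0 < ε → ε < 1 →
      ∫⁻ x, ENNReal.ofReal
          ((ψ x * (ε / (ε ^ 2 + ‖x‖ ^ 2)) ^ (((n : ℝ) - 2) / 2)) ^ ρ) ≤
        ENNReal.ofReal (T₁ * ε ^ (((n : ℝ) - 2) * ρ / 2)) := by
  haveI : NeZero n := ⟨by omega⟩
  haveI : Nontrivial (EuclideanSpace ℝ (Fin n)) :=
    Module.nontrivial_of_finrank_pos (R := ℝ)
      (by rw [finrank_euclideanSpace_fin]; omega)
  have hn3 : (3:ℝ) ≤ (n:ℝ) := by exact_mod_cast hn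
  have hρ0 : 0 < ρ := lt_trans one_pos hρ1
  set q : ℝ := ((n:ℝ) - 2) / 2 with hq
  set s : ℝ := ((n:ℝ) - 2) * ρ with hs
  have hs_pos : 0 < s := by
    apply mul_pos (by linarith) hρ0
  have hs_n : s < n := by
    have : ((n:ℝ) - 2) * ρ = ρ * ((n:ℝ) - 2) := mul_comm _ _
    rw [hs, this]; exact hρn
  have hqρ : q * ρ = s / 2 := by rw [hq, hs]; ring
  have hI := aux_ball_rpow n hn hs_n (by linarith : (0:ℝ) < 2 * δ)
  set I := ∫⁻ x : EuclideanSpace ℝ (Fin n), (Metric.ball (0:EuclideanSpace ℝ (Fin n)) (2*δ)).indicator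
      (fun x => ENNReal.ofReal (‖x‖ ^ (-s))) x with hIdef
  refine ⟨I.toReal + 1, by positivity, ?_⟩
  intro ε hε0 hε1
  have h0ae : ∀ᵐ x : EuclideanSpace ℝ (Fin n) ∂volume, x ≠ 0 := by
    rw [ae_iff]
    simpa [not_not] using measure_singleton (0:EuclideanSpace ℝ (Fin n))
  have hbound : ∀ x : EuclideanSpace ℝ (Fin n), x ≠ 0 →
      ENNReal.ofReal ((ψ x * (ε / (ε ^ 2 + ‖x‖ ^ 2)) ^ q) ^ ρ) ≤
        ENNReal.ofReal (ε ^ (s/2)) *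
          (Metric.ball (0:EuclideanSpace ℝ (Fin n)) (2*δ)).indicator (fun x => ENNReal.ofReal (‖x‖ ^ (-s))) x := by
    intro x hx
    have hxn : 0 < ‖x‖ := norm_pos_iff.mpr hx
    by_cases hmem : x ∈ Metric.ball (0:EuclideanSpace ℝ (Fin n)) (2*δ)
    · rw [Set.indicator_of_mem hmem, ← ENNReal.ofReal_mul (Real.rpow_nonneg hε0.le _)]
      apply ENNReal.ofReal_le_ofReal
      set b : ℝ := ε / (ε ^ 2 + ‖x‖ ^ 2) with hb
      have hden : (0:ℝ) < ε ^ 2 + ‖x‖ ^ 2 := by positivity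
      have hbnn : 0 ≤ b := div_nonneg hε0.le hden.le
      have h1 : ψ x * b ^ q ≤ b ^ q := by
        have := mul_le_mul_of_nonneg_right (hψ1 x) (Real.rpow_nonneg hbnn q)
        simpa using this
      have h2 : (ψ x * b ^ q) ^ ρ ≤ (b ^ q) ^ ρ :=
        Real.rpow_le_rpow (mul_nonneg (hψ0 x) (Real.rpow_nonneg hbnn q)) h1 hρ0.le
      have h3 : (b ^ q) ^ ρ = b ^ (q * ρ) := (Real.rpow_mul hbnn q ρ).symm
      have h4 : b ≤ ε * ‖x‖ ^ (-(2:ℝ)) := by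
        have hx2 : (0:ℝ) < ‖x‖ ^ 2 := by positivity
        have : ε / (ε ^ 2 + ‖x‖ ^ 2) ≤ ε / ‖x‖ ^ 2 :=
          div_le_div_of_nonneg_left hε0.le hx2 (by nlinarith)
        refine this.trans (le_of_eq ?_)
        rw [Real.rpow_neg hxn.le, div_eq_mul_inv]
        congr 1
        rw [show ((2:ℝ)) = ((2:ℕ):ℝ) by norm_num, Real.rpow_natCast]
      have h5 : b ^ (q * ρ) ≤ (ε * ‖x‖ ^ (-(2:ℝ))) ^ (q * ρ) := by
        apply Real.rpow_le_rpow hbnn h4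
        rw [hqρ]; positivity
      have h6 : (ε * ‖x‖ ^ (-(2:ℝ))) ^ (q * ρ) = ε ^ (s/2) * ‖x‖ ^ (-s) := by
        rw [Real.mul_rpow hε0.le (Real.rpow_nonneg hxn.le _), ← Real.rpow_mul hxn.le, hqρ]
        congr 1
        ring
      calc (ψ x * b ^ q) ^ ρ ≤ (b ^ q) ^ ρ := h2
        _ = b ^ (q * ρ) := h3
        _ ≤ (ε * ‖x‖ ^ (-(2:ℝ))) ^ (q * ρ) := h5
        _ = ε ^ (s/2) * ‖x‖ ^ (-s) := h6
    · rw [Set.indicator_of_notMem hmem, mul_zero]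
      have hxout : 2 * δ ≤ ‖x‖ := by
        rw [mem_ball_zero_iff] at hmem; linarith [not_lt.mp hmem]
      rw [hψout x hxout, zero_mul, Real.zero_rpow (ne_of_gt hρ0), ENNReal.ofReal_zero]
  calc ∫⁻ x : EuclideanSpace ℝ (Fin n), ENNReal.ofReal ((ψ x * (ε / (ε ^ 2 + ‖x‖ ^ 2)) ^ q) ^ ρ)
      ≤ ∫⁻ x : EuclideanSpace ℝ (Fin n), ENNReal.ofReal (ε ^ (s/2)) *
          (Metric.ball (0:EuclideanSpace ℝ (Fin n)) (2*δ)).indicator (fun x => ENNReal.ofReal (‖x‖ ^ (-s))) x := by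
        apply lintegral_mono_ae
        filter_upwards [h0ae] with x hx using hbound x hx
    _ = ENNReal.ofReal (ε ^ (s/2)) * I := by
        rw [hIdef, lintegral_const_mul' _ _ ENNReal.ofReal_ne_top]
    _ ≤ ENNReal.ofReal (ε ^ (s/2)) * ENNReal.ofReal (I.toReal + 1) := by
        apply mul_le_mul_right
        calc I = ENNReal.ofReal I.toReal := (ENNReal.ofReal_toReal hI.ne).symm
          _ ≤ ENNReal.ofReal (I.toReal + 1) := ENNReal.ofReal_le_ofReal (by linarith)
    _ = ENNReal.ofReal ((I.toReal + 1) * ε ^ (s / 2)) := by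
        rw [← ENNReal.ofReal_mul (Real.rpow_nonneg hε0.le _), mul_comm]
end
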